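/- arXiv:1205.5050 — 5 statements merged into one kernel-verified Lean document; each statement's English description precedes it below -/
import Mathlib

section
/- The hierarchical lasso problem with constraints $\|\Theta_j\|_1 \le \beta_j^+ + \beta_j^-$, $\beta_j^\pm \ge 0$, and penalty $\lambda \mathbf{1}^T(\beta^+ + \beta^-)$ has the same optimal value as the unconstrained problem with penalty $\lambda \sum_j \max\{|\beta_j|, \|\Theta_j\|_1\}$: precisely, for any $\Theta \in \mathbb{R}^{p \times p}$ and $\beta \in \mathbb{R}^p$, $\min\{\mathbf{1}^T(\beta^+ + \beta^-) : \beta^\pm \ge 0, \beta^+ - \beta^- = \beta, \|\Theta_j\|_1 \le \beta_j^+ + \beta_j^- \ \forall j\} = \sum_{j=1}^p \max\{|\beta_j|, \|\Theta_j\|_1\}$. -/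
theorem stmt_2 (p : ℕ) (β : Fin p → ℝ) (Θ : Matrix (Fin p) (Fin p) ℝ) :
    IsLeast {s : ℝ | ∃ bp bn : Fin p → ℝ,
        (∀ j, 0 ≤ bp j) ∧ (∀ j, 0 ≤ bn j) ∧
        (∀ j, bp j - bn j = β j) ∧
        (∀ j, ∑ k, |Θ j k| ≤ bp j + bn j) ∧
        s = ∑ j, (bp j + bn j)}
      (∑ j, max |β j| (∑ k, |Θ j k|)) := by
  constructor
  · refine ⟨fun j => (max |β j| (∑ k, |Θ j k|) + β j) / 2,
      fun j => (max |β j| (∑ k, |Θ j k|) - β j) / 2, ?_, ?_, ?_, ?_, ?_⟩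
    · intro j
      have h : -β j ≤ max |β j| (∑ k, |Θ j k|) := (neg_le_abs _).trans (le_max_left _ _)
      linarith
    · intro j
      have h : β j ≤ max |β j| (∑ k, |Θ j k|) := (le_abs_self _).trans (le_max_left _ _)
      linarith
    · intro j; ring
    · intro j
      have h : (∑ k, |Θ j k|) ≤ max |β j| (∑ k, |Θ j k|) := le_max_right _ _
      linarith
    · exact Finset.sum_congr rfl fun j _ => by ring
  · rintro s ⟨bp, bn, hp, hn, hd, hΘ, rfl⟩
    apply Finset.sum_le_sum
    intro j _
    apply max_le
    · rw [← hd j]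
      calc |bp j - bn j| ≤ |bp j| + |bn j| := abs_sub _ _
        _ = bp j + bn j := by rw [abs_of_nonneg (hp j), abs_of_nonneg (hn j)]
    · exact hΘ j
end

section
/- The function $f(\alpha) = \|\mathcal{S}(\tilde\theta, t(\lambda/2 + \alpha))\|_1 - \max\{\tilde\beta^+ + t\alpha, 0\} - \max\{\tilde\beta^- + t\alpha, 0\}$ is nonincreasing in $\alpha$ on $[0,\infty)$, where soft-thresholding is applied elementwise. -/
noncomputable def softThresh (c lam : ℝ) : ℝ := Real.sign c * max (|c| - lam) 0

lemma abs_softThresh (c lam : ℝ) (h : 0 ≤ lam) :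
    |softThresh c lam| = max (|c| - lam) 0 := by
  unfold softThresh
  rcases lt_trichotomy c 0 with hc | hc | hc
  · rw [Real.sign_of_neg hc]
    rw [abs_mul, abs_neg, abs_one, one_mul, abs_of_nonneg (le_max_right _ _)]
  · subst hc; simp [Real.sign_zero]; exact h
  · rw [Real.sign_of_pos hc]
    rw [abs_mul, abs_one, one_mul, abs_of_nonneg (le_max_right _ _)]

theorem stmt_6 (p : ℕ) (θ : Fin p → ℝ) (bp bn : ℝ) (t lam : ℝ)
    (ht : 0 < t) (hlam : 0 ≤ lam) :
    ∀ α₁ α₂ : ℝ, 0 ≤ α₁ → α₁ ≤ α₂ →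
      (∑ k, |softThresh (θ k) (t * (lam / 2 + α₂))|)
        - max (bp + t * α₂) 0 - max (bn + t * α₂) 0 ≤
      (∑ k, |softThresh (θ k) (t * (lam / 2 + α₁))|)
        - max (bp + t * α₁) 0 - max (bn + t * α₁) 0 := by
  intro α₁ α₂ h1 h12
  have hμ1 : (0:ℝ) ≤ t * (lam / 2 + α₁) := by positivity
  have hμ2 : (0:ℝ) ≤ t * (lam / 2 + α₂) := by nlinarith
  have hsum : (∑ k, |softThresh (θ k) (t * (lam / 2 + α₂))|) ≤
      ∑ k, |softThresh (θ k) (t * (lam / 2 + α₁))| := by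
    apply Finset.sum_le_sum
    intro k _
    rw [abs_softThresh _ _ hμ2, abs_softThresh _ _ hμ1]
    apply max_le_max _ le_rfl
    nlinarith
  have hbp : max (bp + t * α₁) 0 ≤ max (bp + t * α₂) 0 :=
    max_le_max (by nlinarith) le_rfl
  have hbn : max (bn + t * α₁) 0 ≤ max (bn + t * α₂) 0 :=
    max_le_max (by nlinarith) le_rfl
  linarith
end

section
/- Given the dual variable $\hat\alpha \ge 0$ with $\hat\alpha f(\hat\alpha) = 0$ and $f(\hat\alpha) \le 0$, the point $\hat\theta = \mathcal{S}(\tilde\theta, t(\lambda/2 + \hat\alpha))$, $\hat\beta^\pm = \max\{\tilde\beta^\pm + t\hat\alpha, 0\}$ minimizes $\frac{1}{2t}(\beta^+ - \tilde\beta^+)^2 + \frac{1}{2t}(\beta^- - \tilde\beta^-)^2 + \frac{1}{2t}\|\theta - \tilde\theta\|^2 + \frac{\lambda}{2}\|\theta\|_1$ over all $(\beta^+, \beta^-, \theta)$ with $\beta^\pm \ge 0$ and $\|\theta\|_1 \le \beta^+ + \beta^-$. -/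
-- key facts about soft thresholding
lemma st_facts (t μ c : ℝ) (ht : 0 < t) (hμ : 0 ≤ μ) :
    softThresh c (t*μ) * (c - softThresh c (t*μ)) = t*μ*|softThresh c (t*μ)|
    ∧ |c - softThresh c (t*μ)| ≤ t*μ := by
  have htμ : 0 ≤ t*μ := mul_nonneg ht.le hμ
  unfold softThresh
  rcases lt_trichotomy c 0 with hc | hc | hc
  · rw [Real.sign_of_neg hc, abs_of_neg hc]
    rcases le_or_gt (-c - t*μ) 0 with h | h
    · rw [max_eq_right h]
      constructor
      · simp
      · rw [abs_of_neg (by linarith : c - (-1:ℝ)*0 < 0)]; linarith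
    · rw [max_eq_left h.le]
      constructor
      · rw [abs_of_neg (by nlinarith : (-1:ℝ) * (-c - t*μ) < 0)]; ring
      · rw [abs_of_nonpos (by nlinarith : c - (-1:ℝ)*(-c - t*μ) ≤ 0)]; nlinarith
  · subst hc; simp [Real.sign_zero]; exact htμ
  · rw [Real.sign_of_pos hc, abs_of_pos hc]
    rcases le_or_gt (c - t*μ) 0 with h | h
    · rw [max_eq_right h]
      constructor
      · simp
      · rw [abs_of_pos (by linarith : 0 < c - (1:ℝ)*0)]; linarith
    · rw [max_eq_left h.le]
      constructor
      · rw [abs_of_pos (by nlinarith : 0 < (1:ℝ) * (c - t*μ))]; ring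
      · rw [abs_of_nonneg (by nlinarith : 0 ≤ c - (1:ℝ)*(c - t*μ))]; nlinarith

lemma prox_abs (t μ c x : ℝ) (ht : 0 < t) (hμ : 0 ≤ μ) :
    (1/(2*t)) * (softThresh c (t*μ) - c)^2 + μ * |softThresh c (t*μ)| ≤
    (1/(2*t)) * (x - c)^2 + μ * |x| := by
  obtain ⟨h1, h2⟩ := st_facts t μ c ht hμ
  set s := softThresh c (t*μ) with hs
  have key : (s - c)^2 + 2*t*μ*|s| ≤ (x - c)^2 + 2*t*μ*|x| := by
    have e1 : x*(c-s) ≤ |x| * (t*μ) := by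
      calc x*(c-s) ≤ |x*(c-s)| := le_abs_self _
        _ = |x| * |c - s| := abs_mul _ _
        _ ≤ |x| * (t*μ) := mul_le_mul_of_nonneg_left h2 (abs_nonneg x)
    nlinarith [sq_nonneg (x - s)]
  have e : ((1/(2*t)) * (x - c)^2 + μ * |x|) - ((1/(2*t)) * (s - c)^2 + μ * |s|)
      = (1/(2*t)) * (((x - c)^2 + 2*t*μ*|x|) - ((s - c)^2 + 2*t*μ*|s|)) := by
    field_simp
  have hpos : 0 < 1/(2*t) := by positivity
  nlinarith [mul_le_mul_of_nonneg_left key hpos.le]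

lemma proxB (t α btil b : ℝ) (ht : 0 < t) (hα : 0 ≤ α) (hb : 0 ≤ b) :
    (1/(2*t)) * (max (btil + t*α) 0 - btil)^2 - α * max (btil + t*α) 0 ≤
    (1/(2*t)) * (b - btil)^2 - α * b := by
  set s := max (btil + t*α) 0 with hs
  have key : (s - btil)^2 - 2*t*α*s ≤ (b - btil)^2 - 2*t*α*b := by
    rcases le_or_gt 0 (btil + t*α) with h | h
    · rw [hs, max_eq_left h]; nlinarith [sq_nonneg (b - btil - t*α)]
    · rw [hs, max_eq_right h.le]; nlinarith [mul_nonneg hb (by nlinarith : 0 ≤ -btil - t*α)]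
  have hpos : 0 < 1/(2*t) := by positivity
  have := mul_le_mul_of_nonneg_left key hpos.le
  have ec : ∀ y : ℝ, (1/(2*t)) * ((y - btil)^2 - 2*t*α*y) = (1/(2*t))*(y-btil)^2 - α*y := by
    intro y; field_simp
  rw [ec s, ec b] at this; exact this

theorem stmt_9 (p : ℕ) (θtil : Fin p → ℝ) (bptil bntil : ℝ) (t lam : ℝ)
    (ht : 0 < t) (hlam : 0 ≤ lam)
    (f : ℝ → ℝ)
    (hf : ∀ α, f α = (∑ k, |softThresh (θtil k) (t * (lam / 2 + α))|)
      - max (bptil + t * α) 0 - max (bntil + t * α) 0)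
    (α : ℝ) (hα : 0 ≤ α) (hcs : α * f α = 0) (hfeas : f α ≤ 0) :
    let θhat : Fin p → ℝ := fun k => softThresh (θtil k) (t * (lam / 2 + α))
    let bphat : ℝ := max (bptil + t * α) 0
    let bnhat : ℝ := max (bntil + t * α) 0
    ∀ (bp bn : ℝ) (θ : Fin p → ℝ), 0 ≤ bp → 0 ≤ bn →
      (∑ k, |θ k|) ≤ bp + bn →
      (1 / (2 * t)) * (bphat - bptil)^2 + (1 / (2 * t)) * (bnhat - bntil)^2
        + (1 / (2 * t)) * (∑ k, (θhat k - θtil k)^2)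
        + (lam / 2) * (∑ k, |θhat k|) ≤
      (1 / (2 * t)) * (bp - bptil)^2 + (1 / (2 * t)) * (bn - bntil)^2
        + (1 / (2 * t)) * (∑ k, (θ k - θtil k)^2)
        + (lam / 2) * (∑ k, |θ k|) := by
  intro θhat bphat bnhat bp bn θ hbp hbn hfeasθ
  have hμ : (0:ℝ) ≤ lam / 2 + α := by linarith
  have hθk : ∀ k ∈ Finset.univ (α := Fin p),
      (1/(2*t)) * (θhat k - θtil k)^2 + (lam/2+α) * |θhat k| ≤
      (1/(2*t)) * (θ k - θtil k)^2 + (lam/2+α) * |θ k| := by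
    intro k _
    exact prox_abs t (lam/2+α) (θtil k) (θ k) ht hμ
  have hsum := Finset.sum_le_sum hθk
  simp only [Finset.sum_add_distrib, ← Finset.mul_sum] at hsum
  have hB1 := proxB t α bptil bp ht hα hbp
  have hB2 := proxB t α bntil bn ht hα hbn
  rw [hf] at hcs hfeas
  have hfeas' : α * ((∑ k, |θ k|) - bp - bn) ≤ 0 :=
    mul_nonpos_of_nonneg_of_nonpos hα (by linarith)
  have hcs' : α * ((∑ k, |θhat k|) - bphat - bnhat) = 0 := hcs
  simp only [mul_sub] at hfeas' hcs'
  have e1 : bphat = max (bptil + t*α) 0 := rfl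
  have e2 : bnhat = max (bntil + t*α) 0 := rfl
  rw [← e1] at hB1; rw [← e2] at hB2
  nlinarith [hsum, hB1, hB2, hfeas', hcs']
end

section
/- Let $P$ be an orthogonal projection matrix on $\mathbb{R}^d$ written as $P = UU^T$ with $U^TU = I$. If $U = (U_1 : U_2)$ where the column space of $U_1$ equals the row space of $\tilde X P$ and $\tilde X U_2 = 0$, and if $U_1^T \tilde X_\varepsilon^T \tilde X_\varepsilon U_2 = 0$ and $U_1^T \tilde X_\varepsilon^T \tilde X_\varepsilon U_1$ is positive definite, then $\tilde X P (P \tilde X_\varepsilon^T \tilde X_\varepsilon P)^+ = \tilde X U_1 (U_1^T \tilde X_\varepsilon^T \tilde X_\varepsilon U_1)^{-1} U_1^T$ and hence the null space of $\tilde X P (P\tilde X_\varepsilon^T \tilde X_\varepsilon P)^+$ equals the null space of $\tilde X P$. -/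
/-!
Write `M = P Xeᵀ Xe P` and `A = U₁ᵀ Xeᵀ Xe U₁`. Because `P U₁ = U₁` and the cross term
`U₁ᵀ Xeᵀ Xe U₂` vanishes, `M U₁ = U₁ A` and `U₁ᵀ M = A U₁ᵀ`: on the column space of `U₁` the matrix
`M` acts as the invertible `A`, so its pseudoinverse acts there as `A⁻¹`, i.e. `U₁ᵀ M⁺ = A⁻¹ U₁ᵀ`.
As `X U₂ = 0` gives `X P = X U₁ U₁ᵀ`, the formula follows. The columns of `U₁` lie in the row
space of `X P`, on which `X P` is injective, so `X U₁` is injective and both null spaces are that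
of `U₁ᵀ`.
-/

open Matrix

def IsMoorePenrose {m n : ℕ} (A : Matrix (Fin m) (Fin n) ℝ)
    (B : Matrix (Fin n) (Fin m) ℝ) : Prop :=
  A * B * A = A ∧ B * A * B = B ∧ (A * B)ᵀ = A * B ∧ (B * A)ᵀ = B * A

namespace IsMoorePenrose

variable {k r : ℕ} {M B : Matrix (Fin k) (Fin k) ℝ} {U : Matrix (Fin k) (Fin r) ℝ}
  {A : Matrix (Fin r) (Fin r) ℝ}

/-- `M * B` projects onto the range of `M`, which contains the columns of `U = M * U * A⁻¹`. -/
theorem mul_mul_eq_self_of_mul_eq_mul (hB : IsMoorePenrose M B) (hMU : M * U = U * A)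
    (hA : IsUnit A) : M * B * U = U := by
  have hdet := (isUnit_iff_isUnit_det A).mp hA
  calc M * B * U = M * B * U * A * A⁻¹ := (mul_nonsing_inv_cancel_right A _ hdet).symm
    _ = M * B * M * U * A⁻¹ := by rw [Matrix.mul_assoc (M * B), ← hMU, ← Matrix.mul_assoc]
    _ = U := by rw [hB.1, hMU, mul_nonsing_inv_cancel_right A _ hdet]

theorem transpose_mul_eq_inv_mul (hB : IsMoorePenrose M B) (hMU : M * U = U * A)
    (hUM : Uᵀ * M = A * Uᵀ) (hA : IsUnit A) : Uᵀ * B = A⁻¹ * Uᵀ := by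
  have hproj : Uᵀ * (M * B) = Uᵀ := by
    simpa only [transpose_mul, hB.2.2.1] using
      congrArg transpose (hB.mul_mul_eq_self_of_mul_eq_mul hMU hA)
  have h : A * (Uᵀ * B) = Uᵀ := by rw [← Matrix.mul_assoc, ← hUM, Matrix.mul_assoc, hproj]
  rw [← nonsing_inv_mul_cancel_left A (Uᵀ * B) ((isUnit_iff_isUnit_det A).mp hA), h]

end IsMoorePenrose

namespace Matrix

section RowSpace

variable {R : Type*} [Field R] [LinearOrder R] [IsStrictOrderedRing R]
  {m n r : Type*} [Fintype m] [Fintype n] [Fintype r]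

theorem eq_zero_of_mem_span_range_of_mulVec_eq_zero {Y : Matrix m n R} {v : n → R}
    (hv : v ∈ Submodule.span R (Set.range Y)) (hYv : Y *ᵥ v = 0) : v = 0 := by
  rw [← transpose_transpose Y, ← col, ← range_mulVecLin] at hv
  obtain ⟨c, rfl⟩ := hv
  -- `v = Yᵀ c`, so `v ⬝ᵥ v = c ⬝ᵥ Y v = 0`
  rw [mulVecLin_apply] at hYv ⊢
  refine dotProduct_self_eq_zero.mp ?_
  nth_rw 1 [mulVec_transpose]
  rw [← dotProduct_mulVec, hYv, dotProduct_zero]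

theorem mulVec_injective_mul_of_span_le {Y : Matrix m n R} {U : Matrix n r R}
    (hU : Function.Injective U.mulVec)
    (hspan : Submodule.span R (Set.range Uᵀ) ≤ Submodule.span R (Set.range Y)) :
    Function.Injective (Y * U).mulVec := by
  rw [← coe_mulVecLin]
  refine (injective_iff_map_eq_zero _).mpr fun w hw ↦ ?_
  have hmem : U *ᵥ w ∈ Submodule.span R (Set.range Y) := hspan <| by
    rw [← col, ← range_mulVecLin]
    exact ⟨w, rfl⟩
  have hUw := eq_zero_of_mem_span_range_of_mulVec_eq_zero hmem
    (by rwa [mulVec_mulVec, ← mulVecLin_apply])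
  exact hU (hUw.trans (mulVec_zero U).symm)

end RowSpace

theorem setOf_mul_mulVec_eq_zero {R : Type*} [CommRing R] {m n k : Type*} [Fintype n]
    [Fintype k] {K : Matrix m k R} (hK : Function.Injective K.mulVec) (N : Matrix k n R) :
    {v | (K * N) *ᵥ v = 0} = {v | N *ᵥ v = 0} := by
  ext v
  simp only [Set.mem_ofPred_eq, ← mulVec_mulVec, ← mulVec_zero K, hK.eq_iff]

section OrthonormalColumns

variable {R : Type*} [CommRing R] {d n₁ n₂ : Type*}
  {U₁ : Matrix d n₁ R} {U₂ : Matrix d n₂ R} {P : Matrix d d R}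

theorem transpose_fromCols_mul_fromCols_eq_one_iff [Fintype d] [DecidableEq n₁]
    [DecidableEq n₂] :
    (fromCols U₁ U₂)ᵀ * fromCols U₁ U₂ = 1 ↔
      U₁ᵀ * U₁ = 1 ∧ U₁ᵀ * U₂ = 0 ∧ U₂ᵀ * U₁ = 0 ∧ U₂ᵀ * U₂ = 1 := by
  rw [transpose_fromCols, fromRows_mul_fromCols, ← fromBlocks_one, fromBlocks_inj]

variable [Fintype n₁] [Fintype n₂]

theorem eq_add_of_eq_fromCols_mul_transpose (hP : P = fromCols U₁ U₂ * (fromCols U₁ U₂)ᵀ) :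
    P = U₁ * U₁ᵀ + U₂ * U₂ᵀ := by
  rw [hP, transpose_fromCols, fromCols_mul_fromRows]

variable [Fintype d]

theorem mul_eq_of_eq_fromCols_mul_transpose {k : Type*} {X : Matrix k d R}
    (hXU₂ : X * U₂ = 0) (hP : P = fromCols U₁ U₂ * (fromCols U₁ U₂)ᵀ) :
    X * P = X * U₁ * U₁ᵀ := by
  rw [eq_add_of_eq_fromCols_mul_transpose hP, Matrix.mul_add, ← Matrix.mul_assoc,
    ← Matrix.mul_assoc, hXU₂, Matrix.zero_mul, add_zero]

variable [DecidableEq n₁] [DecidableEq n₂]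

theorem transpose_mul_eq_of_eq_fromCols_mul_transpose
    (hU : (fromCols U₁ U₂)ᵀ * fromCols U₁ U₂ = 1)
    (hP : P = fromCols U₁ U₂ * (fromCols U₁ U₂)ᵀ) : U₁ᵀ * P = U₁ᵀ := by
  obtain ⟨hU₁U₁, hU₁U₂, -⟩ := transpose_fromCols_mul_fromCols_eq_one_iff.mp hU
  rw [eq_add_of_eq_fromCols_mul_transpose hP, Matrix.mul_add, ← Matrix.mul_assoc,
    ← Matrix.mul_assoc, hU₁U₁, hU₁U₂, Matrix.one_mul, Matrix.zero_mul, add_zero]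

theorem mul_eq_self_of_eq_fromCols_mul_transpose
    (hU : (fromCols U₁ U₂)ᵀ * fromCols U₁ U₂ = 1)
    (hP : P = fromCols U₁ U₂ * (fromCols U₁ U₂)ᵀ) : P * U₁ = U₁ := by
  have hPt : Pᵀ = P := by rw [hP, transpose_mul, transpose_transpose]
  rw [← transpose_transpose U₁, ← hPt, ← transpose_mul,
    transpose_mul_eq_of_eq_fromCols_mul_transpose hU hP]

variable {m : Type*} [Fintype m] {Xe : Matrix m d R}

theorem transpose_mul_proj_gram_proj (hU : (fromCols U₁ U₂)ᵀ * fromCols U₁ U₂ = 1)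
    (hP : P = fromCols U₁ U₂ * (fromCols U₁ U₂)ᵀ) (horth : U₁ᵀ * Xeᵀ * Xe * U₂ = 0) :
    U₁ᵀ * (P * Xeᵀ * Xe * P) = U₁ᵀ * Xeᵀ * Xe * U₁ * U₁ᵀ := by
  calc U₁ᵀ * (P * Xeᵀ * Xe * P) = U₁ᵀ * P * Xeᵀ * Xe * P := by simp only [Matrix.mul_assoc]
    _ = U₁ᵀ * Xeᵀ * Xe * (U₁ * U₁ᵀ + U₂ * U₂ᵀ) := by
      rw [transpose_mul_eq_of_eq_fromCols_mul_transpose hU hP,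
        ← eq_add_of_eq_fromCols_mul_transpose hP]
    _ = U₁ᵀ * Xeᵀ * Xe * U₁ * U₁ᵀ := by
      rw [Matrix.mul_add, ← Matrix.mul_assoc, ← Matrix.mul_assoc _ U₂, horth, Matrix.zero_mul,
        add_zero]

theorem proj_gram_proj_mul (hU : (fromCols U₁ U₂)ᵀ * fromCols U₁ U₂ = 1)
    (hP : P = fromCols U₁ U₂ * (fromCols U₁ U₂)ᵀ) (horth : U₁ᵀ * Xeᵀ * Xe * U₂ = 0) :
    P * Xeᵀ * Xe * P * U₁ = U₁ * (U₁ᵀ * Xeᵀ * Xe * U₁) := by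
  have hPt : Pᵀ = P := by rw [hP, transpose_mul, transpose_transpose]
  simpa only [transpose_mul, transpose_transpose, hPt, Matrix.mul_assoc] using
    congrArg transpose (transpose_mul_proj_gram_proj hU hP horth)

end OrthonormalColumns

end Matrix

theorem stmt_14 (n m d r₁ r₂ : ℕ)
    (X : Matrix (Fin n) (Fin d) ℝ) (Xe : Matrix (Fin m) (Fin d) ℝ)
    (P : Matrix (Fin d) (Fin d) ℝ)
    (U₁ : Matrix (Fin d) (Fin r₁) ℝ) (U₂ : Matrix (Fin d) (Fin r₂) ℝ)
    (hP : P = Matrix.fromCols U₁ U₂ * (Matrix.fromCols U₁ U₂)ᵀ)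
    (hU : (Matrix.fromCols U₁ U₂)ᵀ * Matrix.fromCols U₁ U₂ = 1)
    (hcol : Submodule.span ℝ (Set.range U₁ᵀ) =
      Submodule.span ℝ (Set.range (X * P)))
    (hXU₂ : X * U₂ = 0)
    (horth : U₁ᵀ * Xeᵀ * Xe * U₂ = 0)
    (hpd : (U₁ᵀ * Xeᵀ * Xe * U₁).PosDef)
    (Pinv : Matrix (Fin d) (Fin d) ℝ)
    (hPinv : IsMoorePenrose (P * Xeᵀ * Xe * P) Pinv) :
    X * P * Pinv = X * U₁ * (U₁ᵀ * Xeᵀ * Xe * U₁)⁻¹ * U₁ᵀ ∧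
    {v : Fin d → ℝ | (X * P * Pinv).mulVec v = 0} =
      {v : Fin d → ℝ | (X * P).mulVec v = 0} := by
  have hA := hpd.isUnit
  have hXP := mul_eq_of_eq_fromCols_mul_transpose hXU₂ hP
  have hformula : X * P * Pinv = X * U₁ * (U₁ᵀ * Xeᵀ * Xe * U₁)⁻¹ * U₁ᵀ := by
    rw [hXP, Matrix.mul_assoc _ U₁ᵀ, hPinv.transpose_mul_eq_inv_mul
      (proj_gram_proj_mul hU hP horth) (transpose_mul_proj_gram_proj hU hP horth) hA,
      ← Matrix.mul_assoc]
  have hinj : Function.Injective (X * U₁).mulVec := by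
    have hU₁ : Function.Injective U₁.mulVec := fun v w h ↦ by
      simpa [mulVec_mulVec, (transpose_fromCols_mul_fromCols_eq_one_iff.mp hU).1] using
        congrArg (U₁ᵀ *ᵥ ·) h
    have := mulVec_injective_mul_of_span_le hU₁ hcol.le
    rwa [Matrix.mul_assoc, mul_eq_self_of_eq_fromCols_mul_transpose hU hP] at this
  have hinvinj := mulVec_injective_iff_isUnit.mpr (isUnit_nonsing_inv_iff.mpr hA)
  refine ⟨hformula, ?_⟩
  rw [hformula, hXP, Matrix.mul_assoc (X * U₁), setOf_mul_mulVec_eq_zero hinj,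
    setOf_mul_mulVec_eq_zero hinj, setOf_mul_mulVec_eq_zero hinvinj]
end

section
/- Minimizing $\frac{1}{2}\|y - \tilde X \phi\|^2 + w^T\phi$ subject to $D\phi \ge 0$, $L\phi = 0$: if $\hat\phi$ is optimal with active set $\mathcal{A} = \{i : (D\hat\phi)_i > 0\}$ and $P$ is the orthogonal projection onto $\mathrm{null}(L) \cap \mathrm{null}(D_{-\mathcal{A}})$, then $P\hat\phi = \hat\phi$ and $P\tilde X^T(y - \tilde X \hat\phi) = Pw$, and consequently the fitted value satisfies $\tilde X \hat\phi = (\tilde X P)(\tilde X P)^+ (y - (P\tilde X^T)^+ w)$. -/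
open Matrix

/-!
Since `P` is a symmetric projection onto a subspace of `null L ∩ null D_{-𝒜}`, it annihilates
`Lᵀ ν` and, by complementary slackness (`μ` vanishes on `𝒜`), also `Dᵀ μ`; applying `P` to the
stationarity condition therefore leaves `P Xᵀ (y - X φ) = P w`. For the fitted value, put
`M = X P`, so that `Mᵀ = P Xᵀ`. The projection `M M⁺ = (M⁺)ᵀ Mᵀ` sees a vector only through `Mᵀ`,
and `(P Xᵀ)(P Xᵀ)⁺ w = P w` because `P w = P Xᵀ (y - X φ)` lies in the range of `P Xᵀ`. Hence
`M M⁺ (y - (P Xᵀ)⁺ w)` and `M M⁺ (X φ) = M φ = X φ` have the same image under `Mᵀ`.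
-/

section Projection

variable {R ι κ : Type*} [CommRing R] [Fintype ι] [Fintype κ]

theorem mulVec_transpose_mulVec_eq_zero {P : Matrix ι ι R} (hP : Pᵀ = P) (M : Matrix κ ι R)
    (u : κ → R) (h : ∀ v, u ⬝ᵥ M *ᵥ (P *ᵥ v) = 0) : P *ᵥ (Mᵀ *ᵥ u) = 0 := by
  refine dotProduct_eq_zero _ fun v => ?_
  rw [← hP, mulVec_transpose, ← dotProduct_mulVec, mulVec_transpose, ← dotProduct_mulVec]
  exact h v

theorem mul_eq_self_of_mul_eq_self {P Q : Matrix ι ι R} (hP : Pᵀ = P) (hQ : Qᵀ = Q)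
    (hPQ : P * Q = Q) : Q * P = Q := by
  rw [← hP, ← hQ, ← transpose_mul, hPQ]

end Projection

namespace IsMoorePenrose

variable {m n : ℕ} {A : Matrix (Fin m) (Fin n) ℝ} {B : Matrix (Fin n) (Fin m) ℝ}

theorem mul_mulVec_mulVec (h : IsMoorePenrose A B) (z : Fin n → ℝ) :
    (A * B) *ᵥ (A *ᵥ z) = A *ᵥ z := by
  rw [mulVec_mulVec, h.1]

theorem mul_mulVec_eq_of_transpose_mulVec_eq (h : IsMoorePenrose A B) {z z' : Fin m → ℝ}
    (hz : Aᵀ *ᵥ z = Aᵀ *ᵥ z') : (A * B) *ᵥ z = (A * B) *ᵥ z' := by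
  rw [← h.2.2.1, transpose_mul, ← mulVec_mulVec, ← mulVec_mulVec, hz]

end IsMoorePenrose

theorem mulVec_eq_mul_pinv_mulVec_sub {n d : ℕ} {X : Matrix (Fin n) (Fin d) ℝ}
    {P : Matrix (Fin d) (Fin d) ℝ} {w φ : Fin d → ℝ} {y : Fin n → ℝ}
    {XPinv : Matrix (Fin d) (Fin n) ℝ} {PXtinv : Matrix (Fin n) (Fin d) ℝ}
    (hPsym : Pᵀ = P) (hPidem : P * P = P) (hφ : P *ᵥ φ = φ)
    (hgrad : P *ᵥ (Xᵀ *ᵥ (y - X *ᵥ φ)) = P *ᵥ w)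
    (hXPinv : IsMoorePenrose (X * P) XPinv) (hPXtinv : IsMoorePenrose (P * Xᵀ) PXtinv) :
    X *ᵥ φ = (X * P * XPinv) *ᵥ (y - PXtinv *ᵥ w) := by
  have hXφ : X *ᵥ φ = (X * P) *ᵥ φ := by rw [← mulVec_mulVec, hφ]
  have hw : (P * Xᵀ) *ᵥ (y - X *ᵥ φ) = P *ᵥ w := by rw [← mulVec_mulVec, hgrad]
  have hproj : (P * Xᵀ * PXtinv) *ᵥ w = P *ᵥ w := by
    have hPN : P * (P * Xᵀ * PXtinv) = P * Xᵀ * PXtinv := by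
      rw [← Matrix.mul_assoc, ← Matrix.mul_assoc, hPidem]
    rw [← mul_eq_self_of_mul_eq_self hPsym hPXtinv.2.2.1 hPN, ← mulVec_mulVec, ← hw,
      hPXtinv.mul_mulVec_mulVec]
  have hnormal : (X * P)ᵀ *ᵥ (y - PXtinv *ᵥ w) = (X * P)ᵀ *ᵥ (X *ᵥ φ) := by
    rw [transpose_mul, hPsym, mulVec_sub, mulVec_mulVec, hproj, ← hw, mulVec_sub,
      sub_sub_cancel]
  rw [hXPinv.mul_mulVec_eq_of_transpose_mulVec_eq hnormal, hXφ, hXPinv.mul_mulVec_mulVec]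

theorem stmt_19_general (n d r s : ℕ)
    (X : Matrix (Fin n) (Fin d) ℝ)
    (D : Matrix (Fin r) (Fin d) ℝ) (L : Matrix (Fin s) (Fin d) ℝ)
    (w : Fin d → ℝ) (y : Fin n → ℝ)
    (φ : Fin d → ℝ) (μ : Fin r → ℝ) (ν : Fin s → ℝ)
    (A : Set (Fin r)) (hA : A = {i | 0 < D.mulVec φ i})
    (hstat : Xᵀ.mulVec (y - X.mulVec φ) = w - Dᵀ.mulVec μ + Lᵀ.mulVec ν)
    (hμA : ∀ i ∈ A, μ i = 0)
    (hL : L.mulVec φ = 0) (hDfeas : ∀ i, 0 ≤ D.mulVec φ i)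
    (P : Matrix (Fin d) (Fin d) ℝ)
    (hPsym : Pᵀ = P) (hPidem : P * P = P)
    (hPrange : ∀ v : Fin d → ℝ, P.mulVec v = v ↔
      (L.mulVec v = 0 ∧ ∀ i ∉ A, D.mulVec v i = 0))
    (XPinv : Matrix (Fin d) (Fin n) ℝ)
    (hXPinv : IsMoorePenrose (X * P) XPinv)
    (PXtinv : Matrix (Fin n) (Fin d) ℝ)
    (hPXtinv : IsMoorePenrose (P * Xᵀ) PXtinv) :
    P.mulVec φ = φ ∧
    P.mulVec (Xᵀ.mulVec (y - X.mulVec φ)) = P.mulVec w ∧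
    X.mulVec φ = (X * P * XPinv).mulVec (y - PXtinv.mulVec w) := by
  have hφ : P *ᵥ φ = φ := (hPrange φ).2
    ⟨hL, fun i hi => le_antisymm (not_lt.1 (by rwa [hA] at hi)) (hDfeas i)⟩
  have hrange (v : Fin d → ℝ) := (hPrange (P *ᵥ v)).1 (by rw [mulVec_mulVec, hPidem])
  have hν : P *ᵥ (Lᵀ *ᵥ ν) = 0 :=
    mulVec_transpose_mulVec_eq_zero hPsym L ν fun v => by rw [(hrange v).1, dotProduct_zero]
  have hμ : P *ᵥ (Dᵀ *ᵥ μ) = 0 :=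
    mulVec_transpose_mulVec_eq_zero hPsym D μ fun v => Finset.sum_eq_zero fun i _ => by
      by_cases hi : i ∈ A
      · rw [hμA i hi, zero_mul]
      · rw [(hrange v).2 i hi, mul_zero]
  have hgrad : P *ᵥ (Xᵀ *ᵥ (y - X *ᵥ φ)) = P *ᵥ w := by
    rw [hstat, mulVec_add, mulVec_sub, hμ, hν, sub_zero, add_zero]
  exact ⟨hφ, hgrad, mulVec_eq_mul_pinv_mulVec_sub hPsym hPidem hφ hgrad hXPinv hPXtinv⟩

theorem stmt_19 (n d r s : ℕ)
    (X : Matrix (Fin n) (Fin d) ℝ)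
    (D : Matrix (Fin r) (Fin d) ℝ) (L : Matrix (Fin s) (Fin d) ℝ)
    (w : Fin d → ℝ) (y : Fin n → ℝ)
    (φ : Fin d → ℝ) (μ : Fin r → ℝ) (ν : Fin s → ℝ)
    (A : Set (Fin r)) (hA : A = {i | 0 < D.mulVec φ i})
    (hstat : Xᵀ.mulVec (y - X.mulVec φ) = w - Dᵀ.mulVec μ + Lᵀ.mulVec ν)
    (hμ : ∀ i, 0 ≤ μ i) (hμA : ∀ i ∈ A, μ i = 0)
    (hL : L.mulVec φ = 0) (hDfeas : ∀ i, 0 ≤ D.mulVec φ i)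
    (P : Matrix (Fin d) (Fin d) ℝ)
    (hPsym : Pᵀ = P) (hPidem : P * P = P)
    (hPrange : ∀ v : Fin d → ℝ, P.mulVec v = v ↔
      (L.mulVec v = 0 ∧ ∀ i ∉ A, D.mulVec v i = 0))
    (XPinv : Matrix (Fin d) (Fin n) ℝ)
    (hXPinv : IsMoorePenrose (X * P) XPinv)
    (PXtinv : Matrix (Fin n) (Fin d) ℝ)
    (hPXtinv : IsMoorePenrose (P * Xᵀ) PXtinv) :
    P.mulVec φ = φ ∧
    P.mulVec (Xᵀ.mulVec (y - X.mulVec φ)) = P.mulVec w ∧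
    X.mulVec φ = (X * P * XPinv).mulVec (y - PXtinv.mulVec w) :=
  stmt_19_general n d r s X D L w y φ μ ν A hA hstat hμA hL hDfeas P hPsym hPidem hPrange XPinv
    hXPinv PXtinv hPXtinv
end
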